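/- Let (Ω, d) be a differential ∗-calculus over a unital ∗-algebra B equipped with an almost complex structure ⊕_{(a,b)∈ℕ²} Ω^{(a,b)}, and let ∂ and ∂̄ be the unique homogeneous operators of bidegree (1,0) and (0,1) defined on Ω^{(a,b)} by composing d with the projections onto Ω^{(a+1,b)} and Ω^{(a,b+1)} respectively. Then the following are equivalent: (i) d = ∂ + ∂̄; (ii) ∂² = 0, ∂̄² = 0, and ∂∂̄ = −∂̄∂ (that is, (⊕_{(a,b)} Ω^{(a,b)}, ∂, ∂̄) is a double complex). -/

import Mathlib

/-!
(i) ⇒ (ii): expanding `d² = 0` with `d = ∂ + ∂̄` gives `∂² + (∂̄∂ + ∂∂̄) + ∂̄² = 0`, a sum of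
terms of the three distinct bidegrees `(2,0)`, `(1,1)`, `(0,2)`, so each of them vanishes.

(ii) ⇒ (i): on a form of bidegree `p`, `d = ∂ + ∂̄` holds exactly when `d` of it has no
components outside the bidegrees `p + (1,0)` and `p + (0,1)`. By the Leibniz rule the span of
such forms is a subalgebra. It contains `Ω⁰ = Ω^{(0,0)}`, and for `a ∈ Ω⁰` the form
`d∂a = -d∂̄a` has no `(2,0)`-part (that is `∂²a = 0`) and no `(0,2)`-part (that is `-∂̄²a = 0`),
so it contains `∂a` and `∂̄a` as well, hence `da = ∂a + ∂̄a`. Since `Ω⁰` and `dΩ⁰` generate `Ω`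
as an algebra, the subalgebra is all of `Ω`.
-/

open DirectSum

namespace GradedAlgebra

variable {ι R A : Type*} [DecidableEq ι] [AddMonoid ι] [CommSemiring R] [Semiring A]
  [Algebra R A] {𝒜 : ι → Submodule R A} [GradedAlgebra 𝒜]

variable (𝒜) in
theorem proj_mem (i : ι) (x : A) : proj 𝒜 i x ∈ 𝒜 i :=
  (decompose 𝒜 x i).2

theorem proj_of_mem {i : ι} {x : A} (hx : x ∈ 𝒜 i) : proj 𝒜 i x = x :=
  decompose_of_mem_same 𝒜 hx

theorem proj_of_mem_ne {i j : ι} {x : A} (hx : x ∈ 𝒜 i) (hij : i ≠ j) : proj 𝒜 j x = 0 :=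
  decompose_of_mem_ne 𝒜 hx hij

theorem proj_add_proj_of_mem_sup {i j : ι} {x : A} (hij : i ≠ j) (hx : x ∈ 𝒜 i ⊔ 𝒜 j) :
    proj 𝒜 i x + proj 𝒜 j x = x := by
  obtain ⟨u, hu, v, hv, rfl⟩ := Submodule.mem_sup.mp hx
  rw [map_add, map_add, proj_of_mem hu, proj_of_mem_ne hv hij.symm, proj_of_mem_ne hu hij,
    proj_of_mem hv, add_zero, zero_add]

theorem proj_eq_zero_of_mem_iSup {P : ι → Prop} {j : ι} {x : A}
    (hx : x ∈ ⨆ (i) (_ : P i), 𝒜 i) (hj : ¬P j) : proj 𝒜 j x = 0 := by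
  refine (iSup₂_le fun i hi y hy => ?_ : (⨆ (i) (_ : P i), 𝒜 i) ≤ LinearMap.ker (proj 𝒜 j)) hx
  exact proj_of_mem_ne hy (ne_of_apply_ne P fun h => hj (h ▸ hi))

theorem mem_of_proj_eq_zero {i : ι} {x : A} (h : ∀ j ≠ i, proj 𝒜 j x = 0) : x ∈ 𝒜 i := by
  classical
  have hx := sum_support_decompose 𝒜 x
  rw [Finset.sum_eq_single i (fun j _ hj => by simpa using h j hj) (fun hi => by simp_all)] at hx
  exact hx ▸ proj_mem 𝒜 i x

theorem eq_zero_of_add_add_eq_zero {i j k : ι} {x y z : A} (hx : x ∈ 𝒜 i) (hy : y ∈ 𝒜 j)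
    (hz : z ∈ 𝒜 k) (hij : i ≠ j) (hik : i ≠ k) (hjk : j ≠ k) (h : x + y + z = 0) :
    x = 0 ∧ y = 0 ∧ z = 0 := by
  have hi := congrArg (proj 𝒜 i) h
  have hj := congrArg (proj 𝒜 j) h
  have hk := congrArg (proj 𝒜 k) h
  rw [map_add, map_add, map_zero, proj_of_mem hx, proj_of_mem_ne hy hij.symm,
    proj_of_mem_ne hz hik.symm, add_zero, add_zero] at hi
  rw [map_add, map_add, map_zero, proj_of_mem_ne hx hij, proj_of_mem hy,
    proj_of_mem_ne hz hjk.symm, zero_add, add_zero] at hj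
  rw [map_add, map_add, map_zero, proj_of_mem_ne hx hik, proj_of_mem_ne hy hjk,
    proj_of_mem hz, zero_add, zero_add] at hk
  exact ⟨hi, hj, hk⟩

end GradedAlgebra

section SplitDifferential

variable {ι R A : Type*} [AddCommMonoid ι] [CommSemiring R] [Semiring A] [Algebra R A]
  (𝒜 : ι → Submodule R A)

section GradedMonoid

variable [SetLike.GradedMonoid 𝒜] {p q s t : ι} {x y : A}

theorem mul_mem_sup_of_mem_sup_left (hx : x ∈ 𝒜 (p + s) ⊔ 𝒜 (p + t)) (hy : y ∈ 𝒜 q) :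
    x * y ∈ 𝒜 (p + q + s) ⊔ 𝒜 (p + q + t) := by
  obtain ⟨u, hu, v, hv, rfl⟩ := Submodule.mem_sup.mp hx
  rw [add_mul, add_right_comm p q s, add_right_comm p q t]
  exact add_mem (Submodule.mem_sup_left (SetLike.mul_mem_graded hu hy))
    (Submodule.mem_sup_right (SetLike.mul_mem_graded hv hy))

theorem mul_mem_sup_of_mem_sup_right (hx : x ∈ 𝒜 p) (hy : y ∈ 𝒜 (q + s) ⊔ 𝒜 (q + t)) :
    x * y ∈ 𝒜 (p + q + s) ⊔ 𝒜 (p + q + t) := by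
  obtain ⟨u, hu, v, hv, rfl⟩ := Submodule.mem_sup.mp hy
  rw [mul_add, add_assoc p q s, add_assoc p q t]
  exact add_mem (Submodule.mem_sup_left (SetLike.mul_mem_graded hx hu))
    (Submodule.mem_sup_right (SetLike.mul_mem_graded hx hv))

end GradedMonoid

def splitPiece (d : A →ₗ[R] A) (s t p : ι) : Submodule R A :=
  𝒜 p ⊓ (𝒜 (p + s) ⊔ 𝒜 (p + t)).comap d

def splitSpan (d : A →ₗ[R] A) (s t : ι) : Submodule R A :=
  ⨆ p, splitPiece 𝒜 d s t p

variable {𝒜}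

theorem apply_eq_add_of_mem_splitSpan [DecidableEq ι] [IsLeftCancelAdd ι] [GradedAlgebra 𝒜]
    {d f g : A →ₗ[R] A} {s t : ι} (hst : s ≠ t)
    (hf : ∀ p, ∀ x ∈ 𝒜 p, f x = GradedAlgebra.proj 𝒜 (p + s) (d x))
    (hg : ∀ p, ∀ x ∈ 𝒜 p, g x = GradedAlgebra.proj 𝒜 (p + t) (d x))
    {x : A} (hx : x ∈ splitSpan 𝒜 d s t) : d x = f x + g x := by
  induction hx using Submodule.iSup_induction' with
  | mem p x hx =>
    rw [hf p x hx.1, hg p x hx.1,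
      GradedAlgebra.proj_add_proj_of_mem_sup ((add_right_injective p).ne hst) hx.2]
  | zero => simp
  | add x y _ _ hx hy => rw [map_add, map_add, map_add, hx, hy, add_add_add_comm]

variable [SetLike.GradedMonoid 𝒜] {d : A →ₗ[R] A} {s t : ι}

theorem mul_mem_splitPiece (sign : ι → R)
    (hd : ∀ p, ∀ x ∈ 𝒜 p, ∀ y, d (x * y) = d x * y + sign p • (x * d y))
    {p q : ι} {x y : A} (hx : x ∈ splitPiece 𝒜 d s t p) (hy : y ∈ splitPiece 𝒜 d s t q) :
    x * y ∈ splitPiece 𝒜 d s t (p + q) := by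
  refine ⟨SetLike.mul_mem_graded hx.1 hy.1, Submodule.mem_comap.mpr ?_⟩
  rw [hd p x hx.1]
  exact add_mem (mul_mem_sup_of_mem_sup_left 𝒜 hx.2 hy.1)
    (Submodule.smul_mem _ _ (mul_mem_sup_of_mem_sup_right 𝒜 hx.1 hy.2))

theorem splitSpan_mul_le (sign : ι → R)
    (hd : ∀ p, ∀ x ∈ 𝒜 p, ∀ y, d (x * y) = d x * y + sign p • (x * d y)) :
    splitSpan 𝒜 d s t * splitSpan 𝒜 d s t ≤ splitSpan 𝒜 d s t := by
  simp only [splitSpan, Submodule.iSup_mul, Submodule.mul_iSup]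
  refine iSup₂_le fun q p => Submodule.mul_le.mpr fun x hx y hy => ?_
  exact Submodule.mem_iSup_of_mem (p + q) (mul_mem_splitPiece sign hd hx hy)

end SplitDifferential

theorem adjoin_degree_zero_union_image_eq_top {R A : Type*} [CommSemiring R] [Semiring A]
    [Algebra R A] (G : ℕ → Submodule R A) [GradedAlgebra G] (d : A → A)
    (hspan : ∀ k : ℕ, G k = Submodule.span R
      {ω : A | ∃ (a₀ : A) (f : Fin k → A), a₀ ∈ G 0 ∧ (∀ i, f i ∈ G 0) ∧
        ω = a₀ * (List.ofFn fun i => d (f i)).prod}) :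
    Algebra.adjoin R (G 0 ∪ d '' G 0) = ⊤ := by
  refine eq_top_iff.mpr fun x _ => DirectSum.Decomposition.inductionOn G (zero_mem _)
    (fun {k} m => ?_) (fun _ _ => add_mem) x
  suffices G k ≤ Subalgebra.toSubmodule (Algebra.adjoin R (G 0 ∪ d '' G 0)) from this m.2
  rw [hspan k, Submodule.span_le]
  rintro _ ⟨a₀, f, ha₀, hf, rfl⟩
  refine Subalgebra.mul_mem _ (Algebra.subset_adjoin (Or.inl ha₀))
    (Subalgebra.list_prod_mem _ fun y hy => ?_)
  obtain ⟨i, rfl⟩ := List.mem_ofFn.mp hy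
  exact Algebra.subset_adjoin (Or.inr ⟨f i, hf i, rfl⟩)

section AlmostComplex

open GradedAlgebra

variable {Ω : Type*} [Ring Ω] [Algebra ℂ Ω] {G : ℕ → Submodule ℂ Ω}
  {W : ℕ × ℕ → Submodule ℂ Ω}

theorem bigraded_le_totalDegree (hGW : ∀ k : ℕ, G k = ⨆ (p : ℕ × ℕ) (_ : p.1 + p.2 = k), W p)
    (p : ℕ × ℕ) : W p ≤ G (p.1 + p.2) :=
  hGW _ ▸ le_iSup₂ (f := fun (q : ℕ × ℕ) (_ : q.1 + q.2 = p.1 + p.2) => W q) p rfl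

theorem totalDegree_zero_le (hGW : ∀ k : ℕ, G k = ⨆ (p : ℕ × ℕ) (_ : p.1 + p.2 = k), W p) :
    G 0 ≤ W 0 := by
  rw [hGW]
  refine iSup₂_le ?_
  rintro ⟨a, b⟩ (hab : a + b = 0)
  obtain ⟨rfl, rfl⟩ : a = 0 ∧ b = 0 := by omega
  exact le_rfl

theorem totalDegree_one_le (hGW : ∀ k : ℕ, G k = ⨆ (p : ℕ × ℕ) (_ : p.1 + p.2 = k), W p) :
    G 1 ≤ W (1, 0) ⊔ W (0, 1) := by
  rw [hGW]
  refine iSup₂_le ?_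
  rintro ⟨a, b⟩ (hab : a + b = 1)
  obtain ⟨rfl, rfl⟩ | ⟨rfl, rfl⟩ : a = 1 ∧ b = 0 ∨ a = 0 ∧ b = 1 := by omega
  exacts [le_sup_left, le_sup_right]

variable [GradedAlgebra W]

theorem mem_bigraded_one_one (hGW : ∀ k : ℕ, G k = ⨆ (p : ℕ × ℕ) (_ : p.1 + p.2 = k), W p)
    {x : Ω} (hx : x ∈ G 2) (h20 : proj W (2, 0) x = 0) (h02 : proj W (0, 2) x = 0) :
    x ∈ W (1, 1) := by
  refine mem_of_proj_eq_zero fun j hj => ?_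
  by_cases hj2 : j.1 + j.2 = 2
  · obtain ⟨a, b⟩ := j
    obtain ⟨rfl, rfl⟩ | ⟨rfl, rfl⟩ | ⟨rfl, rfl⟩ :
        a = 2 ∧ b = 0 ∨ a = 1 ∧ b = 1 ∨ a = 0 ∧ b = 2 := by
      simp only at hj2; omega
    exacts [h20, absurd rfl hj, h02]
  · exact proj_eq_zero_of_mem_iSup (hGW 2 ▸ hx) hj2


theorem apply_mem_splitSpan_of_mem_zero {d pd pb : Ω →ₗ[ℂ] Ω}
    (hd_deg : ∀ k : ℕ, ∀ ω ∈ G k, d ω ∈ G (k + 1)) (hd2 : ∀ ω : Ω, d (d ω) = 0)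
    (hGW : ∀ k : ℕ, G k = ⨆ (p : ℕ × ℕ) (_ : p.1 + p.2 = k), W p)
    (hpd : ∀ a b : ℕ, ∀ ω ∈ W (a, b), pd ω = proj W (a + 1, b) (d ω))
    (hpb : ∀ a b : ℕ, ∀ ω ∈ W (a, b), pb ω = proj W (a, b + 1) (d ω))
    (h1 : ∀ ω : Ω, pd (pd ω) = 0) (h2 : ∀ ω : Ω, pb (pb ω) = 0) {a : Ω} (ha : a ∈ G 0) :
    d a ∈ splitSpan W d (1, 0) (0, 1) := by
  have ha₀ : a ∈ W (0, 0) := totalDegree_zero_le hGW ha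
  have hu : pd a ∈ W (1, 0) := hpd 0 0 a ha₀ ▸ proj_mem W _ _
  have hv : pb a ∈ W (0, 1) := hpb 0 0 a ha₀ ▸ proj_mem W _ _
  have hda : pd a + pb a = d a := by
    rw [hpd 0 0 a ha₀, hpb 0 0 a ha₀]
    exact proj_add_proj_of_mem_sup (by decide) (totalDegree_one_le hGW (hd_deg 0 a ha))
  have hsum : d (pd a) + d (pb a) = 0 := by rw [← map_add, hda, hd2]
  have h20 : proj W (2, 0) (d (pd a)) = 0 := (hpd 1 0 _ hu).symm.trans (h1 a)
  have h02 : proj W (0, 2) (d (pb a)) = 0 := (hpb 0 1 _ hv).symm.trans (h2 a)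
  have hdu : d (pd a) ∈ W (1, 1) :=
    mem_bigraded_one_one hGW (hd_deg 1 _ (bigraded_le_totalDegree hGW _ hu)) h20
      (by rw [eq_neg_of_add_eq_zero_left hsum, map_neg, h02, neg_zero])
  have hdv : d (pb a) ∈ W (1, 1) :=
    mem_bigraded_one_one hGW (hd_deg 1 _ (bigraded_le_totalDegree hGW _ hv))
      (by rw [eq_neg_of_add_eq_zero_right hsum, map_neg, h20, neg_zero]) h02
  rw [← hda]
  exact add_mem (Submodule.mem_iSup_of_mem (1, 0) ⟨hu, Submodule.mem_sup_right hdu⟩)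
    (Submodule.mem_iSup_of_mem (0, 1) ⟨hv, Submodule.mem_sup_left hdv⟩)

theorem splitSpan_eq_top [GradedAlgebra G] {d pd pb : Ω →ₗ[ℂ] Ω}
    (hd_deg : ∀ k : ℕ, ∀ ω ∈ G k, d ω ∈ G (k + 1)) (hd2 : ∀ ω : Ω, d (d ω) = 0)
    (hleibniz : ∀ k : ℕ, ∀ α ∈ G k, ∀ β : Ω,
      d (α * β) = d α * β + ((-1 : ℂ) ^ k) • (α * d β))
    (hspan : ∀ k : ℕ, G k = Submodule.span ℂ
      {ω : Ω | ∃ (a₀ : Ω) (f : Fin k → Ω), a₀ ∈ G 0 ∧ (∀ i, f i ∈ G 0) ∧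
        ω = a₀ * (List.ofFn fun i => d (f i)).prod})
    (hGW : ∀ k : ℕ, G k = ⨆ (p : ℕ × ℕ) (_ : p.1 + p.2 = k), W p)
    (hpd : ∀ a b : ℕ, ∀ ω ∈ W (a, b), pd ω = proj W (a + 1, b) (d ω))
    (hpb : ∀ a b : ℕ, ∀ ω ∈ W (a, b), pb ω = proj W (a, b + 1) (d ω))
    (h1 : ∀ ω : Ω, pd (pd ω) = 0) (h2 : ∀ ω : Ω, pb (pb ω) = 0) :
    splitSpan W d (1, 0) (0, 1) = ⊤ := by
  have hG0 : G 0 ≤ splitPiece W d (1, 0) (0, 1) 0 := fun a ha =>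
    ⟨totalDegree_zero_le hGW ha, totalDegree_one_le hGW (hd_deg 0 a ha)⟩
  have hmul := splitSpan_mul_le (s := ((1 : ℕ), (0 : ℕ))) (t := (0, 1))
    (fun p : ℕ × ℕ => (-1 : ℂ) ^ (p.1 + p.2))
    fun p x hx => hleibniz _ x (bigraded_le_totalDegree hGW p hx)
  let S : Subalgebra ℂ Ω := (splitSpan W d (1, 0) (0, 1)).toSubalgebra
    (Submodule.mem_iSup_of_mem 0 (hG0 (SetLike.one_mem_graded G)))
    fun x y hx hy => hmul (Submodule.mul_mem_mul hx hy)
  have hS : Algebra.adjoin ℂ (G 0 ∪ d '' G 0) ≤ S :=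
    Algebra.adjoin_le <| Set.union_subset (fun a ha => Submodule.mem_iSup_of_mem 0 (hG0 ha))
      (Set.image_subset_iff.mpr fun a ha =>
        apply_mem_splitSpan_of_mem_zero hd_deg hd2 hGW hpd hpb h1 h2 ha)
  rw [adjoin_degree_zero_union_image_eq_top G d hspan, top_le_iff] at hS
  exact eq_top_iff.mpr fun x _ => (hS ▸ Algebra.mem_top : x ∈ S)

theorem double_complex_of_eq_add {d pd pb : Ω →ₗ[ℂ] Ω} (hd2 : ∀ ω : Ω, d (d ω) = 0)
    (hpd : ∀ a b : ℕ, ∀ ω ∈ W (a, b), pd ω = proj W (a + 1, b) (d ω))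
    (hpb : ∀ a b : ℕ, ∀ ω ∈ W (a, b), pb ω = proj W (a, b + 1) (d ω))
    (H : ∀ ω : Ω, d ω = pd ω + pb ω) :
    (∀ ω : Ω, pd (pd ω) = 0) ∧ (∀ ω : Ω, pb (pb ω) = 0) ∧
      (∀ ω : Ω, pd (pb ω) = - pb (pd ω)) := by
  have hpd_mem : ∀ a b : ℕ, ∀ ω ∈ W (a, b), pd ω ∈ W (a + 1, b) := fun a b ω hω =>
    hpd a b ω hω ▸ proj_mem W _ _
  have hpb_mem : ∀ a b : ℕ, ∀ ω ∈ W (a, b), pb ω ∈ W (a, b + 1) := fun a b ω hω =>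
    hpb a b ω hω ▸ proj_mem W _ _
  have key : ∀ p, ∀ x ∈ W p, pd (pd x) = 0 ∧ pb (pd x) + pd (pb x) = 0 ∧ pb (pb x) = 0 := by
    rintro ⟨a, b⟩ x hx
    refine eq_zero_of_add_add_eq_zero (hpd_mem _ _ _ (hpd_mem a b x hx))
      (add_mem (hpb_mem _ _ _ (hpd_mem a b x hx)) (hpd_mem _ _ _ (hpb_mem a b x hx)))
      (hpb_mem _ _ _ (hpb_mem a b x hx)) (by simp) (by simp only [ne_eq, Prod.mk.injEq]; omega)
      (by simp) ?_
    rw [← hd2 x, H x, map_add, H, H]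
    abel
  have ext : ∀ f g : Ω →ₗ[ℂ] Ω, (∀ p, ∀ x ∈ W p, f x = g x) → ∀ ω, f ω = g ω := fun f g h =>
    DFunLike.congr_fun (decompose_lhom_ext W fun p => LinearMap.ext fun x => h p x x.2)
  exact ⟨ext (pd ∘ₗ pd) 0 fun p x hx => (key p x hx).1,
    ext (pb ∘ₗ pb) 0 fun p x hx => (key p x hx).2.2,
    ext (pd ∘ₗ pb) (-(pb ∘ₗ pd)) fun p x hx => eq_neg_of_add_eq_zero_right (key p x hx).2.1⟩

end AlmostComplex

theorem almost_complex_integrable_iff_double_complex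
    {Ω : Type*} [Ring Ω] [Algebra ℂ Ω]
    -- the ℕ-grading of the calculus:
    (G : ℕ → Submodule ℂ Ω) [GradedAlgebra G]
    -- the differential:
    (d : Ω →ₗ[ℂ] Ω)
    (hd_deg : ∀ k : ℕ, ∀ ω ∈ G k, d ω ∈ G (k + 1))
    (hd2 : ∀ ω : Ω, d (d ω) = 0)
    (hleibniz : ∀ k : ℕ, ∀ α ∈ G k, ∀ β : Ω,
      d (α * β) = d α * β + ((-1 : ℂ) ^ k) • (α * d β))
    -- `Ω^k = span_ℂ {a₀ da₁ ⋯ da_k}` (surjectivity hypothesis of a calculus):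
    (hspan : ∀ k : ℕ, G k = Submodule.span ℂ
      {ω : Ω | ∃ (a₀ : Ω) (f : Fin k → Ω), a₀ ∈ G 0 ∧ (∀ i, f i ∈ G 0) ∧
        ω = a₀ * (List.ofFn fun i => d (f i)).prod})
    -- the almost complex structure: an `ℕ × ℕ`-grading refining the ℕ-grading,
    (W : ℕ × ℕ → Submodule ℂ Ω) [GradedAlgebra W]
    (hGW : ∀ k : ℕ, G k = ⨆ (p : ℕ × ℕ) (_ : p.1 + p.2 = k), W p)
    -- `∂` and `∂̄`, defined on `Ω^{(a,b)}` by projecting `d`: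
    (pd pb : Ω →ₗ[ℂ] Ω)
    (hpd : ∀ a b : ℕ, ∀ ω ∈ W (a, b),
      pd ω = GradedAlgebra.proj W (a + 1, b) (d ω))
    (hpb : ∀ a b : ℕ, ∀ ω ∈ W (a, b),
      pb ω = GradedAlgebra.proj W (a, b + 1) (d ω)) :
    (∀ ω : Ω, d ω = pd ω + pb ω) ↔
      ((∀ ω : Ω, pd (pd ω) = 0) ∧ (∀ ω : Ω, pb (pb ω) = 0) ∧
        (∀ ω : Ω, pd (pb ω) = - pb (pd ω))) := by
  refine ⟨double_complex_of_eq_add hd2 hpd hpb, fun ⟨h1, h2, _⟩ ω => ?_⟩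
  have hω : ω ∈ splitSpan W d (1, 0) (0, 1) :=
    splitSpan_eq_top hd_deg hd2 hleibniz hspan hGW hpd hpb h1 h2 ▸ Submodule.mem_top
  have hf : ∀ p : ℕ × ℕ, ∀ x ∈ W p, pd x = GradedAlgebra.proj W (p + (1, 0)) (d x) :=
    fun p => hpd p.1 p.2
  have hg : ∀ p : ℕ × ℕ, ∀ x ∈ W p, pb x = GradedAlgebra.proj W (p + (0, 1)) (d x) :=
    fun p => hpb p.1 p.2
  have hne : ((1, 0) : ℕ × ℕ) ≠ (0, 1) := by simp
  exact apply_eq_add_of_mem_splitSpan hne hf hg hω
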